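/- Let n, k, r be integers with r > k ≥ 2 and n ≥ 2k. If H is a vertex-k-maximal r-uniform hypergraph on n vertices, then |E(H)| ≤ C(n, r) − C(n − k, r), where C(a, b) denotes the binomial coefficient (equal to 0 when b > a). -/

import Mathlib

/-- A finite hypergraph: a finite vertex set together with a finite set of
non-empty edges, each a subset of the vertex set. -/
structure FinHypergraph where
  verts : Finset ℕ
  edges : Finset (Finset ℕ)
  edge_sub : ∀ e ∈ edges, e ⊆ verts
  edge_nonempty : ∀ e ∈ edges, e.Nonempty

namespace FinHypergraph

/-- `H` is `r`-uniform if every edge has cardinality `r`. -/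
def IsUniform (H : FinHypergraph) (r : ℕ) : Prop := ∀ e ∈ H.edges, e.card = r

/-- `H'` is a subhypergraph of `H`. -/
def IsSub (H' H : FinHypergraph) : Prop := H'.verts ⊆ H.verts ∧ H'.edges ⊆ H.edges

/-- Two vertices are adjacent if some edge contains both. -/
def Adj (H : FinHypergraph) (u v : ℕ) : Prop := ∃ e ∈ H.edges, u ∈ e ∧ v ∈ e

/-- `H` is connected if every pair of vertices is joined by a path
(equivalently, a walk, i.e. is reachable via the adjacency relation). -/
def Connected (H : FinHypergraph) : Prop :=
  ∀ u ∈ H.verts, ∀ v ∈ H.verts, Relation.ReflTransGen H.Adj u v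

/-- The subhypergraph of `H` induced by the vertex set `Y`. -/
def induce (H : FinHypergraph) (Y : Finset ℕ) : FinHypergraph where
  verts := H.verts ∩ Y
  edges := H.edges.filter (fun e => e ⊆ Y)
  edge_sub := by
    intro e he
    simp only [Finset.mem_filter] at he
    exact Finset.subset_inter (H.edge_sub e he.1) he.2
  edge_nonempty := by
    intro e he
    simp only [Finset.mem_filter] at he
    exact H.edge_nonempty e he.1

/-- `X` is a vertex-cut of `H` if deleting `X` leaves a disconnected hypergraph. -/
def IsVertexCut (H : FinHypergraph) (X : Finset ℕ) : Prop :=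
  X ⊆ H.verts ∧ ¬ (H.induce (H.verts \ X)).Connected

open Classical in
/-- The vertex-connectivity of `H`: the minimum cardinality of a vertex-cut if one
exists, and `|V(H)| - 1` otherwise. -/
noncomputable def kappa (H : FinHypergraph) : ℕ :=
  if ∃ X, H.IsVertexCut X then sInf {m | ∃ X, H.IsVertexCut X ∧ X.card = m}
  else H.verts.card - 1

/-- `κ̄(H)`: the maximum vertex-connectivity over all subhypergraphs of `H`. -/
noncomputable def kappaBar (H : FinHypergraph) : ℕ :=
  sSup {m | ∃ H' : FinHypergraph, H'.IsSub H ∧ H'.kappa = m}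

/-- `H + e`: add the edge `e` (a non-empty subset of the vertices) to `H`. -/
def addEdge (H : FinHypergraph) (e : Finset ℕ) : FinHypergraph where
  verts := H.verts
  edges := if e ⊆ H.verts ∧ e.Nonempty then insert e H.edges else H.edges
  edge_sub := by
    intro f hf
    split at hf
    · rcases Finset.mem_insert.mp hf with rfl | hf
      · exact (by assumption : f ⊆ H.verts ∧ f.Nonempty).1
      · exact H.edge_sub f hf
    · exact H.edge_sub f hf
  edge_nonempty := by
    intro f hf
    split at hf
    · rcases Finset.mem_insert.mp hf with rfl | hf
      · exact (by assumption : f ⊆ H.verts ∧ f.Nonempty).2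
      · exact H.edge_nonempty f hf
    · exact H.edge_nonempty f hf

/-- `H + F`: add a set `F` of edges to `H`. -/
def addEdges (H : FinHypergraph) (F : Finset (Finset ℕ)) : FinHypergraph where
  verts := H.verts
  edges := H.edges ∪ F.filter (fun e => e ⊆ H.verts ∧ e.Nonempty)
  edge_sub := by
    intro f hf
    rcases Finset.mem_union.mp hf with hf | hf
    · exact H.edge_sub f hf
    · exact (Finset.mem_filter.mp hf).2.1
  edge_nonempty := by
    intro f hf
    rcases Finset.mem_union.mp hf with hf | hf
    · exact H.edge_nonempty f hf
    · exact (Finset.mem_filter.mp hf).2.2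

/-- `H` is vertex-`k`-maximal (as an `r`-uniform hypergraph): `κ̄(H) ≤ k`, but adding
any edge of the complement `H^c` creates a subhypergraph of connectivity at least `k + 1`. -/
def VertexKMaximal (H : FinHypergraph) (r k : ℕ) : Prop :=
  H.IsUniform r ∧ H.kappaBar ≤ k ∧
    ∀ e : Finset ℕ, e ⊆ H.verts → e.card = r → e ∉ H.edges →
      k + 1 ≤ (H.addEdge e).kappaBar

/-- The complete `r`-uniform hypergraph on the vertex set `V`. -/
def completeHG (V : Finset ℕ) (r : ℕ) : FinHypergraph where
  verts := V
  edges := (V.powersetCard r).filter (fun e => e.Nonempty)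
  edge_sub := by
    intro e he
    simp only [Finset.mem_filter, Finset.mem_powersetCard] at he
    exact he.1.1
  edge_nonempty := by
    intro e he
    exact (Finset.mem_filter.mp he).2

/-- The hypergraph on vertex set `V` with no edges. -/
def emptyHG (V : Finset ℕ) : FinHypergraph where
  verts := V
  edges := ∅
  edge_sub := by simp
  edge_nonempty := by simp

/-- The `r`-join `H₁ ∨_r H₂`: the union of `H₁` and `H₂` together with all
`r`-element subsets of `V(H₁) ∪ V(H₂)` meeting both `V(H₁)` and `V(H₂)`. -/
def rJoin (H1 H2 : FinHypergraph) (r : ℕ) : FinHypergraph where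
  verts := H1.verts ∪ H2.verts
  edges := H1.edges ∪ H2.edges ∪
    ((H1.verts ∪ H2.verts).powersetCard r).filter
      (fun e => (e ∩ H1.verts).Nonempty ∧ (e ∩ H2.verts).Nonempty)
  edge_sub := by
    intro e he
    rcases Finset.mem_union.mp he with he | he
    · rcases Finset.mem_union.mp he with he | he
      · exact (H1.edge_sub e he).trans Finset.subset_union_left
      · exact (H2.edge_sub e he).trans Finset.subset_union_right
    · exact (Finset.mem_powersetCard.mp (Finset.mem_filter.mp he).1).1
  edge_nonempty := by
    intro e he
    rcases Finset.mem_union.mp he with he | he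
    · rcases Finset.mem_union.mp he with he | he
      · exact H1.edge_nonempty e he
      · exact H2.edge_nonempty e he
    · obtain ⟨x, hx⟩ := (Finset.mem_filter.mp he).2.1
      exact ⟨x, (Finset.mem_inter.mp hx).1⟩

/-- The union of two hypergraphs. -/
def hUnion (H1 H2 : FinHypergraph) : FinHypergraph where
  verts := H1.verts ∪ H2.verts
  edges := H1.edges ∪ H2.edges
  edge_sub := by
    intro e he
    rcases Finset.mem_union.mp he with he | he
    · exact (H1.edge_sub e he).trans Finset.subset_union_left
    · exact (H2.edge_sub e he).trans Finset.subset_union_right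
  edge_nonempty := by
    intro e he
    rcases Finset.mem_union.mp he with he | he
    · exact H1.edge_nonempty e he
    · exact H2.edge_nonempty e he

/-- The union of the hypergraphs `f 0, …, f (m-1)`. -/
def unionOver (m : ℕ) (f : ℕ → FinHypergraph) : FinHypergraph where
  verts := (Finset.range m).biUnion (fun i => (f i).verts)
  edges := (Finset.range m).biUnion (fun i => (f i).edges)
  edge_sub := by
    intro e he
    obtain ⟨i, hi, hei⟩ := Finset.mem_biUnion.mp he
    exact ((f i).edge_sub e hei).trans (Finset.subset_biUnion_of_mem (fun i => (f i).verts) hi)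
  edge_nonempty := by
    intro e he
    obtain ⟨i, _, hei⟩ := Finset.mem_biUnion.mp he
    exact (f i).edge_nonempty e hei

/-- `C` is a component of `G`: a maximal connected subhypergraph. -/
def IsComponent (G C : FinHypergraph) : Prop :=
  C.IsSub G ∧ C.Connected ∧
    ∀ C' : FinHypergraph, C'.IsSub G → C'.Connected → C.IsSub C' → C' = C

/-- `(S, H₁, H₂)` is a separation triple of `H`: `S` is a minimum vertex-cut,
`H₁ = H[S ∪ V(C₁)]` and `H₂ = H[S ∪ V(C₂)]`, where `C₁` is a component of `H - S`
and `C₂ = H - (S ∪ V(C₁))`. -/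
def IsSeparationTriple (H : FinHypergraph) (S : Finset ℕ) (H1 H2 : FinHypergraph) : Prop :=
  H.IsVertexCut S ∧ (∀ X : Finset ℕ, H.IsVertexCut X → S.card ≤ X.card) ∧
    ∃ C1 : FinHypergraph, IsComponent (H.induce (H.verts \ S)) C1 ∧
      H1 = H.induce (S ∪ C1.verts) ∧
      H2 = H.induce (S ∪ (H.verts \ (S ∪ C1.verts)))

end FinHypergraph

/-!
It suffices to show that a vertex-`k`-maximal `H` on `n` vertices has at least `C(n - k, r)`
non-edges (`r`-sets of vertices that are not edges); we induct on `n`. Once `n ≥ k + r`, deleting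
all but two vertices disconnects `H` (edges have at least three vertices), so `H` has a vertex cut
`S` with `|S| = κ(H) ≤ κ̄(H) ≤ k`, and `V ∖ S` splits into sides `A`, `B` with no edge of `H - S`
meeting both. Each side `H[S ∪ A]` is again vertex-`k`-maximal: a subhypergraph of connectivity
`> k` created by adding an `r`-set `e ⊆ S ∪ A` stays connected after removing `S`, so it cannot
leave `S ∪ A`. The non-edges of the two sides and the `r`-sets of `A ∪ B` meeting both `A` and `B`
are disjoint families of non-edges of `H`, and with `t = k - |S|` the inequality
`C(a+b-t, r) + C(a, r) + C(b, r) ≤ C(a+b, r) + C(a-t, r) + C(b-t, r)` closes the induction.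
-/

namespace Nat

theorem choose_add_choose_le_choose_add {q : ℕ} (hq : q ≠ 0) (a b : ℕ) :
    a.choose q + b.choose q ≤ (a + b).choose q := by
  obtain ⟨q, rfl⟩ : ∃ p, q = p + 1 := ⟨q - 1, by omega⟩
  induction b with
  | zero => simp
  | succ b ih =>
    rw [← add_assoc, choose_succ_succ', choose_succ_succ']
    have := choose_le_choose q (le_add_left b a)
    omega

/-- Pascal's rule under truncated subtraction: for `m ≤ t` both sides vanish, which needs the
lower indices to be at least `1`. -/
theorem choose_sub_eq_choose_sub_succ_add (m t q : ℕ) :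
    (m - t).choose (q + 2) = (m - (t + 1)).choose (q + 2) + (m - (t + 1)).choose (q + 1) := by
  rcases lt_or_ge t m with h | h
  · rw [show m - t = m - (t + 1) + 1 by omega, choose_succ_succ', add_comm]
  · simp [Nat.sub_eq_zero_of_le h, Nat.sub_eq_zero_of_le (le_succ_of_le h)]

theorem choose_add_sub_add_choose_add_choose_le {r : ℕ} (hr : 2 ≤ r) (a b t : ℕ) :
    (a + b - t).choose r + a.choose r + b.choose r ≤
      (a + b).choose r + (a - t).choose r + (b - t).choose r := by
  obtain ⟨q, rfl⟩ : ∃ q, r = q + 2 := ⟨r - 2, by omega⟩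
  induction t with
  | zero => simp
  | succ t ih =>
    rw [choose_sub_eq_choose_sub_succ_add (a + b), choose_sub_eq_choose_sub_succ_add a,
      choose_sub_eq_choose_sub_succ_add b] at ih
    have : (a - (t + 1)).choose (q + 1) + (b - (t + 1)).choose (q + 1) ≤
        (a + b - (t + 1)).choose (q + 1) :=
      (choose_add_choose_le_choose_add (by omega) _ _).trans (choose_le_choose _ (by omega))
    omega

end Nat

namespace Finset

variable {α : Type*} [DecidableEq α]

theorem subset_of_subset_union_of_subset_union {s t u g : Finset α} (htu : Disjoint t u)
    (ht : g ⊆ s ∪ t) (hu : g ⊆ s ∪ u) : g ⊆ s := by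
  have := subset_inter ht hu
  rwa [← union_inter_distrib_left, disjoint_iff_inter_eq_empty.mp htu, union_empty] at this

def crossSets (A B : Finset α) (r : ℕ) : Finset (Finset α) :=
  ((A ∪ B).powersetCard r).filter fun g => ¬g ⊆ A ∧ ¬g ⊆ B

theorem mem_crossSets {A B g : Finset α} {r : ℕ} :
    g ∈ crossSets A B r ↔ (g ⊆ A ∪ B ∧ g.card = r) ∧ ¬g ⊆ A ∧ ¬g ⊆ B := by
  rw [crossSets, mem_filter, mem_powersetCard]

theorem choose_card_union_le (A B : Finset α) (r : ℕ) :
    (A ∪ B).card.choose r ≤ A.card.choose r + B.card.choose r + (crossSets A B r).card := by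
  calc (A ∪ B).card.choose r = ((A ∪ B).powersetCard r).card := (card_powersetCard _ _).symm
    _ ≤ (A.powersetCard r ∪ B.powersetCard r ∪ crossSets A B r).card := by
      refine card_le_card fun g hg => ?_
      simp only [mem_union, mem_powersetCard, mem_crossSets] at hg ⊢
      tauto
    _ ≤ _ := by
      grw [card_union_le, card_union_le, card_powersetCard, card_powersetCard]

end Finset

namespace FinHypergraph

variable {H H' H'' : FinHypergraph} {X Y S A B e : Finset ℕ} {r k : ℕ}

theorem IsSub.refl (H : FinHypergraph) : H.IsSub H := ⟨subset_rfl, subset_rfl⟩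

theorem IsSub.trans (h₁ : H''.IsSub H') (h₂ : H'.IsSub H) : H''.IsSub H :=
  ⟨h₁.1.trans h₂.1, h₁.2.trans h₂.2⟩

@[simp] theorem induce_verts : (H.induce Y).verts = H.verts ∩ Y := rfl

@[simp] theorem induce_edges : (H.induce Y).edges = H.edges.filter (· ⊆ Y) := rfl

theorem induce_isSub (H : FinHypergraph) (Y : Finset ℕ) : (H.induce Y).IsSub H :=
  ⟨Finset.inter_subset_left, Finset.filter_subset _ _⟩

theorem eq_or_mem_of_mem_addEdge {g : Finset ℕ} (hg : g ∈ (H.addEdge e).edges) :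
    g = e ∨ g ∈ H.edges := by
  unfold addEdge at hg
  split at hg
  · exact Finset.mem_insert.mp hg
  · exact Or.inr hg

theorem mem_addEdge_self (he : e ⊆ H.verts) (hne : e.Nonempty) : e ∈ (H.addEdge e).edges := by
  simp [addEdge, he, hne]

theorem edges_subset_addEdge : H.edges ⊆ (H.addEdge e).edges := by
  unfold addEdge
  split
  · exact Finset.subset_insert _ _
  · exact subset_rfl

theorem IsSub.isSub_of_notMem_addEdge (h : H'.IsSub (H.addEdge e)) (he : e ∉ H'.edges) :
    H'.IsSub H :=
  ⟨h.1, fun g hg => (eq_or_mem_of_mem_addEdge (h.2 hg)).resolve_left (by rintro rfl; exact he hg)⟩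

theorem IsSub.isSub_induce_addEdge (h : H'.IsSub (H.addEdge e)) (hY : H'.verts ⊆ Y) :
    H'.IsSub ((H.induce Y).addEdge e) := by
  refine ⟨Finset.subset_inter h.1 hY, fun g hg => ?_⟩
  have hgY : g ⊆ H.verts ∩ Y := H'.edge_sub g hg |>.trans (Finset.subset_inter h.1 hY)
  rcases eq_or_mem_of_mem_addEdge (h.2 hg) with rfl | hgH
  · exact mem_addEdge_self hgY (H'.edge_nonempty g hg)
  · exact edges_subset_addEdge (Finset.mem_filter.mpr ⟨hgH, hgY.trans Finset.inter_subset_right⟩)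

theorem Connected.verts_subset (hH : H.Connected) {z : ℕ} (hz : z ∈ H.verts) (hzA : z ∈ A)
    (hA : ∀ g ∈ H.edges, ∀ x ∈ g, x ∈ A → g ⊆ A) : H.verts ⊆ A := by
  intro w hw
  have hzw := hH z hz w hw
  clear hw
  induction hzw with
  | refl => exact hzA
  | tail _ hadj ih =>
    obtain ⟨g, hg, hxg, hyg⟩ := hadj
    exact hA g hg _ hxg ih hyg

theorem kappa_le_card_of_isVertexCut (hX : H.IsVertexCut X) : H.kappa ≤ X.card := by
  rw [kappa, if_pos ⟨X, hX⟩]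
  exact Nat.sInf_le ⟨X, hX, rfl⟩

theorem exists_isVertexCut_card_eq_kappa (h : ∃ X, H.IsVertexCut X) :
    ∃ S, H.IsVertexCut S ∧ S.card = H.kappa := by
  obtain ⟨X, hX⟩ := h
  have hne : {m | ∃ X, H.IsVertexCut X ∧ X.card = m}.Nonempty := ⟨X.card, X, hX, rfl⟩
  obtain ⟨S, hS, hSk⟩ := Nat.sInf_mem hne
  exact ⟨S, hS, by rw [hSk, kappa, if_pos ⟨X, hX⟩]⟩

theorem kappa_le_card_verts (H : FinHypergraph) : H.kappa ≤ H.verts.card := by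
  by_cases h : ∃ X, H.IsVertexCut X
  · obtain ⟨X, hX⟩ := h
    exact (kappa_le_card_of_isVertexCut hX).trans (Finset.card_le_card hX.1)
  · rw [kappa, if_neg h]
    exact Nat.sub_le _ _

theorem connected_induce_sdiff_of_card_lt_kappa (hX : X ⊆ H.verts) (h : X.card < H.kappa) :
    (H.induce (H.verts \ X)).Connected := by
  by_contra hc
  exact absurd (kappa_le_card_of_isVertexCut ⟨hX, hc⟩) h.not_ge

theorem bddAbove_kappa_isSub (H : FinHypergraph) :
    BddAbove {m | ∃ H' : FinHypergraph, H'.IsSub H ∧ H'.kappa = m} := by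
  refine ⟨H.verts.card, ?_⟩
  rintro _ ⟨H', h, rfl⟩
  exact H'.kappa_le_card_verts.trans (Finset.card_le_card h.1)

theorem kappa_le_kappaBar (h : H'.IsSub H) : H'.kappa ≤ H.kappaBar :=
  le_csSup H.bddAbove_kappa_isSub ⟨H', h, rfl⟩

theorem exists_isSub_kappa_eq_kappaBar (H : FinHypergraph) :
    ∃ H' : FinHypergraph, H'.IsSub H ∧ H'.kappa = H.kappaBar := by
  have hne : {m | ∃ H' : FinHypergraph, H'.IsSub H ∧ H'.kappa = m}.Nonempty :=
    ⟨H.kappa, H, IsSub.refl H, rfl⟩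
  exact Nat.sSup_mem hne H.bddAbove_kappa_isSub

theorem kappaBar_mono (h : H'.IsSub H) : H'.kappaBar ≤ H.kappaBar := by
  obtain ⟨H'', h'', hk⟩ := H'.exists_isSub_kappa_eq_kappaBar
  exact hk ▸ kappa_le_kappaBar (h''.trans h)

theorem exists_isVertexCut (hH : H.IsUniform r) (hr : 3 ≤ r) (hV : 2 ≤ H.verts.card) :
    ∃ X, H.IsVertexCut X := by
  obtain ⟨a, ha, b, hb, hab⟩ := Finset.one_lt_card.mp hV
  refine ⟨H.verts \ {a, b}, Finset.sdiff_subset, fun hconn => hab ?_⟩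
  set G := H.induce (H.verts \ (H.verts \ {a, b})) with hG
  have hGV : G.verts = {a, b} := by
    ext x
    simp only [hG, induce_verts, Finset.mem_inter, Finset.mem_sdiff, Finset.mem_insert,
      Finset.mem_singleton]
    constructor
    · tauto
    · rintro (rfl | rfl) <;> tauto
  have hGE : G.edges = ∅ := by
    refine Finset.eq_empty_of_forall_notMem fun g hg => ?_
    have := (Finset.card_le_card (hGV ▸ G.edge_sub g hg)).trans Finset.card_le_two
    have := hH g (Finset.mem_filter.mp hg).1
    omega
  have hsub := hconn.verts_subset (A := {a}) (by simp [hGV]) (Finset.mem_singleton_self a)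
    (by simp [hGE])
  exact (Finset.mem_singleton.mp (hsub (by simp [hGV]))).symm

theorem VertexKMaximal.exists_isVertexCut_card_le (hH : H.VertexKMaximal r k)
    (h : ∃ X, H.IsVertexCut X) : ∃ S, H.IsVertexCut S ∧ S.card ≤ k := by
  obtain ⟨S, hS, hSk⟩ := exists_isVertexCut_card_eq_kappa h
  exact ⟨S, hS, hSk ▸ (kappa_le_kappaBar (IsSub.refl H)).trans hH.2.1⟩

structure IsSeparation (H : FinHypergraph) (S A B : Finset ℕ) : Prop where
  subset : S ⊆ H.verts
  disjoint : Disjoint A B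
  union_eq : A ∪ B = H.verts \ S
  edge_subset : ∀ g ∈ H.edges, g ⊆ A ∪ B → g ⊆ A ∨ g ⊆ B

theorem IsSeparation.symm (h : H.IsSeparation S A B) : H.IsSeparation S B A :=
  ⟨h.subset, h.disjoint.symm, Finset.union_comm A B ▸ h.union_eq,
    fun g hg hgBA => (h.edge_subset g hg (Finset.union_comm B A ▸ hgBA)).symm⟩

theorem IsSeparation.disjoint_separator (h : H.IsSeparation S A B) : Disjoint S A :=
  Finset.disjoint_of_subset_right (h.union_eq ▸ Finset.subset_union_left) Finset.disjoint_sdiff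

theorem IsSeparation.card_verts (h : H.IsSeparation S A B) :
    H.verts.card = S.card + (A.card + B.card) := by
  rw [← Finset.card_union_of_disjoint h.disjoint, h.union_eq,
    Finset.card_sdiff_of_subset h.subset, Nat.add_sub_cancel' (Finset.card_le_card h.subset)]

theorem IsSeparation.card_induce_verts (h : H.IsSeparation S A B) :
    (H.induce (S ∪ A)).verts.card = S.card + A.card := by
  have hA : A ⊆ H.verts := h.union_eq ▸ Finset.subset_union_left |>.trans Finset.sdiff_subset
  rw [induce_verts, Finset.inter_eq_right.mpr (Finset.union_subset h.subset hA),
    Finset.card_union_of_disjoint h.disjoint_separator]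

theorem IsVertexCut.exists_isSeparation (hX : H.IsVertexCut X) :
    ∃ A B, H.IsSeparation X A B ∧ A.Nonempty ∧ B.Nonempty := by
  classical
  obtain ⟨hXV, hdis⟩ := hX
  simp only [Connected, not_forall] at hdis
  obtain ⟨u, hu, v, hv, huv⟩ := hdis
  set G := H.induce (H.verts \ X)
  let A := (H.verts \ X).filter (Relation.ReflTransGen G.Adj u)
  have hA : A ⊆ H.verts \ X := Finset.filter_subset _ _
  refine ⟨A, (H.verts \ X) \ A, ⟨hXV, Finset.disjoint_sdiff, Finset.union_sdiff_of_subset hA,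
    fun g hg hgV => ?_⟩, ⟨u, ?_⟩, ⟨v, ?_⟩⟩
  · rw [Finset.union_sdiff_of_subset hA] at hgV
    by_cases hgA : ∃ x ∈ g, x ∈ A
    · obtain ⟨x, hxg, hxA⟩ := hgA
      refine Or.inl fun y hyg => Finset.mem_filter.mpr ⟨hgV hyg, ?_⟩
      exact (Finset.mem_filter.mp hxA).2.tail ⟨g, Finset.mem_filter.mpr ⟨hg, hgV⟩, hxg, hyg⟩
    · push Not at hgA
      exact Or.inr fun y hyg => Finset.mem_sdiff.mpr ⟨hgV hyg, hgA y hyg⟩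
  · exact Finset.mem_filter.mpr ⟨Finset.mem_of_mem_inter_right hu, .refl⟩
  · exact Finset.mem_sdiff.mpr ⟨Finset.mem_of_mem_inter_right hv,
      fun hvA => huv (Finset.mem_filter.mp hvA).2⟩

def nonEdges (H : FinHypergraph) (r : ℕ) : Finset (Finset ℕ) := H.verts.powersetCard r \ H.edges

theorem mem_nonEdges {g : Finset ℕ} :
    g ∈ H.nonEdges r ↔ (g ⊆ H.verts ∧ g.card = r) ∧ g ∉ H.edges := by
  rw [nonEdges, Finset.mem_sdiff, Finset.mem_powersetCard]

theorem card_edges_add_card_nonEdges (hH : H.IsUniform r) :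
    H.edges.card + (H.nonEdges r).card = H.verts.card.choose r := by
  rw [add_comm, nonEdges, Finset.card_sdiff_add_card_eq_card fun g hg =>
    Finset.mem_powersetCard.mpr ⟨H.edge_sub g hg, hH g hg⟩, Finset.card_powersetCard]

theorem nonEdges_induce_subset : (H.induce Y).nonEdges r ⊆ H.nonEdges r := by
  intro g hg
  simp only [mem_nonEdges, induce_verts, induce_edges, Finset.mem_filter,
    Finset.subset_inter_iff] at hg ⊢
  tauto

theorem IsSeparation.crossSets_subset_nonEdges (h : H.IsSeparation S A B) :
    Finset.crossSets A B r ⊆ H.nonEdges r := by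
  intro g hg
  obtain ⟨⟨hgAB, hgr⟩, hgA, hgB⟩ := Finset.mem_crossSets.mp hg
  refine mem_nonEdges.mpr ⟨⟨hgAB.trans (h.union_eq ▸ Finset.sdiff_subset), hgr⟩, fun hgE => ?_⟩
  exact (h.edge_subset g hgE hgAB).elim hgA hgB

/-- An `r`-set lying on both sides would lie in `S`, so the three families are disjoint. -/
theorem IsSeparation.card_nonEdges_add_le (h : H.IsSeparation S A B) (hSr : S.card < r) :
    ((H.induce (S ∪ A)).nonEdges r).card + ((H.induce (S ∪ B)).nonEdges r).card +
      (Finset.crossSets A B r).card ≤ (H.nonEdges r).card := by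
  have hsides : Disjoint ((H.induce (S ∪ A)).nonEdges r) ((H.induce (S ∪ B)).nonEdges r) := by
    refine Finset.disjoint_left.mpr fun g hgA hgB => ?_
    simp only [mem_nonEdges, induce_verts, Finset.subset_inter_iff] at hgA hgB
    have hgS := Finset.subset_of_subset_union_of_subset_union h.disjoint hgA.1.1.2 hgB.1.1.2
    exact absurd (Finset.card_le_card hgS) (hgA.1.2 ▸ hSr).not_ge
  have hcross : Disjoint ((H.induce (S ∪ A)).nonEdges r ∪ (H.induce (S ∪ B)).nonEdges r)
      (Finset.crossSets A B r) := by
    refine Finset.disjoint_left.mpr fun g hg hgX => ?_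
    obtain ⟨⟨hgAB, -⟩, hgA, hgB⟩ := Finset.mem_crossSets.mp hgX
    simp only [Finset.mem_union, mem_nonEdges, induce_verts, Finset.subset_inter_iff] at hg
    rcases hg with hg | hg
    · rw [Finset.union_comm] at hg
      exact hgA (Finset.subset_of_subset_union_of_subset_union h.symm.disjoint_separator.symm
        hgAB hg.1.1.2)
    · rw [Finset.union_comm] at hg hgAB
      exact hgB (Finset.subset_of_subset_union_of_subset_union h.disjoint_separator.symm
        hgAB hg.1.1.2)
  rw [← Finset.card_union_of_disjoint hsides, ← Finset.card_union_of_disjoint hcross]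
  exact Finset.card_le_card (Finset.union_subset
    (Finset.union_subset nonEdges_induce_subset nonEdges_induce_subset)
    h.crossSets_subset_nonEdges)

theorem IsSeparation.verts_subset_of_isSub_addEdge (h : H.IsSeparation S A B)
    (hH' : H'.IsSub (H.addEdge e)) (he : e ⊆ S ∪ A) (hconn : (H'.induce (H'.verts \ S)).Connected)
    {z : ℕ} (hz : z ∈ H'.verts) (hzS : z ∉ S) (hzA : z ∈ A) : H'.verts ⊆ S ∪ A := by
  have hclosed : ∀ g ∈ (H'.induce (H'.verts \ S)).edges, ∀ x ∈ g, x ∈ A → g ⊆ A := by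
    intro g hg x hxg hxA
    rw [induce_edges, Finset.mem_filter] at hg
    have hgAB : g ⊆ A ∪ B := h.union_eq ▸ hg.2.trans (Finset.sdiff_subset_sdiff hH'.1 subset_rfl)
    rcases eq_or_mem_of_mem_addEdge (hH'.2 hg.1) with rfl | hgH
    · rw [Finset.union_comm] at he
      exact Finset.subset_of_subset_union_of_subset_union h.symm.disjoint_separator.symm hgAB he
    · exact (h.edge_subset g hgH hgAB).resolve_right fun hgB =>
        Finset.disjoint_left.mp h.disjoint hxA (hgB hxg)
  have hA := hconn.verts_subset (by simp [hz, hzS]) hzA hclosed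
  intro x hx
  by_cases hxS : x ∈ S
  · exact Finset.mem_union_left _ hxS
  · exact Finset.mem_union_right _ (hA (by simp [hx, hxS]))

theorem IsSeparation.vertexKMaximal_induce (h : H.IsSeparation S A B)
    (hH : H.VertexKMaximal r k) (hSk : S.card ≤ k) (hkr : k < r) :
    (H.induce (S ∪ A)).VertexKMaximal r k := by
  refine ⟨fun g hg => hH.1 g (Finset.mem_filter.mp hg).1,
    (kappaBar_mono (H.induce_isSub _)).trans hH.2.1, fun e heV her he => ?_⟩
  rw [induce_verts, Finset.subset_inter_iff] at heV
  have heH : e ∉ H.edges := fun heH => he (Finset.mem_filter.mpr ⟨heH, heV.2⟩)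
  obtain ⟨H', hH', hκ⟩ := (H.addEdge e).exists_isSub_kappa_eq_kappaBar
  have hkκ : k + 1 ≤ H'.kappa := hκ ▸ hH.2.2 e heV.1 her heH
  have heH' : e ∈ H'.edges := by
    by_contra he'
    have := (kappa_le_kappaBar (hH'.isSub_of_notMem_addEdge he')).trans hH.2.1
    omega
  obtain ⟨z, hze, hzS⟩ : ∃ z ∈ e, z ∉ S := Finset.not_subset.mp fun heS => by
    have := Finset.card_le_card heS
    omega
  have hzA : z ∈ A := (Finset.mem_union.mp (heV.2 hze)).resolve_left hzS
  have hconn : (H'.induce (H'.verts \ S)).Connected := by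
    rw [← Finset.sdiff_inter_self_right]
    refine connected_induce_sdiff_of_card_lt_kappa Finset.inter_subset_right ?_
    have : (S ∩ H'.verts).card ≤ S.card := Finset.card_le_card Finset.inter_subset_left
    omega
  have hV' := h.verts_subset_of_isSub_addEdge hH' heV.2 hconn (H'.edge_sub e heH' hze) hzS hzA
  exact hkκ.trans (kappa_le_kappaBar (hH'.isSub_induce_addEdge hV'))

theorem VertexKMaximal.choose_le_card_nonEdges (hk : 2 ≤ k) (hkr : k < r)
    (hH : H.VertexKMaximal r k) : (H.verts.card - k).choose r ≤ (H.nonEdges r).card := by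
  induction hn : H.verts.card using Nat.strong_induction_on generalizing H with
  | _ n ih =>
  rcases lt_or_ge n (k + r) with hsmall | hlarge
  · rw [Nat.choose_eq_zero_of_lt (by omega)]
    exact Nat.zero_le _
  obtain ⟨S, hS, hSk⟩ :=
    hH.exists_isVertexCut_card_le (exists_isVertexCut hH.1 (by omega) (by omega))
  obtain ⟨A, B, h, hA, hB⟩ := hS.exists_isSeparation
  have hcard := h.card_verts
  have hNA := ih _ (by have := hB.card_pos; omega) (h.vertexKMaximal_induce hH hSk hkr)
    h.card_induce_verts
  have hNB := ih _ (by have := hA.card_pos; omega) (h.symm.vertexKMaximal_induce hH hSk hkr)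
    h.symm.card_induce_verts
  have hcount := h.card_nonEdges_add_le (r := r) (by omega)
  have hcross := Finset.choose_card_union_le A B r
  rw [Finset.card_union_of_disjoint h.disjoint] at hcross
  have harith := Nat.choose_add_sub_add_choose_add_choose_le (r := r) (by omega) A.card B.card
    (k - S.card)
  rw [show S.card + A.card - k = A.card - (k - S.card) by omega] at hNA
  rw [show S.card + B.card - k = B.card - (k - S.card) by omega] at hNB
  rw [show n - k = A.card + B.card - (k - S.card) by omega]
  omega

end FinHypergraph

theorem stmt_12_general (n k r : ℕ) (hk : 2 ≤ k) (hkr : k < r)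
    (H : FinHypergraph) (hcard : H.verts.card = n) (hH : H.VertexKMaximal r k) :
    H.edges.card ≤ n.choose r - (n - k).choose r := by
  subst hcard
  have := hH.choose_le_card_nonEdges hk hkr
  have := H.card_edges_add_card_nonEdges hH.1
  omega

/-- For `r > k ≥ 2` and `n ≥ 2k`, every vertex-`k`-maximal
`r`-uniform hypergraph on `n` vertices has at most `C(n,r) - C(n-k,r)` edges. -/
theorem stmt_12 (n k r : ℕ) (hk : 2 ≤ k) (hkr : k < r) (hn : 2 * k ≤ n)
    (H : FinHypergraph) (hcard : H.verts.card = n) (hH : H.VertexKMaximal r k) :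
    H.edges.card ≤ n.choose r - (n - k).choose r :=
  stmt_12_general n k r hk hkr H hcard hH
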